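/- Lemma of homological algebra: Let (A,∂) be a chain complex in an abelian category with an increasing filtration {F_pA} of subcomplexes such that each A_n is the union of F_pA_n, each F_pA_n vanishes for p sufficiently small, and H_q(gr^F_p A) = 0 for all q ≠ p. Define P_n = ker(F_nA_n → gr^F_n A_{n−1}) and Q_n = ∂(F_nA_{n+1}) + F_{n−1}A_n. Then Q ⊂ P ⊂ A are subcomplexes, the quotient P/Q is the complex ... → H_{n+1}(gr^F_{n+1}A) → H_n(gr^F_n A) → H_{n−1}(gr^F_{n−1}A) → ..., and both maps P → A and P → P/Q are quasi-isomorphisms. -/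

import Mathlib

/-!
`P_n` and `Q_n` are the preimages in `F_n A_n` of the cycles and boundaries of `gr_n A` in
degree `n`. Everything follows from one descent: by the vanishing of `H_q(gr_p A)` for `q ≠ p`,
an element of `F_p A_n` whose boundary lies one step lower in the filtration is, modulo a
boundary from `F_p`, an element of `F_{p-1} A_n`. Starting from any filtration degree
(exhaustiveness) one descends to the diagonal `p = n`, which gives the quasi-isomorphism
`P → A`; below the diagonal one descends until the filtration vanishes, which shows that the
cycles of `F_{n-1} A_n` bound in `F_{n-1} A_{n+1}`, and hence that `Q` is acyclic.
-/

namespace FilteredChainComplex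

variable {R : Type*} [Ring R] {A : ℤ → Type*} [∀ n, AddCommGroup (A n)] [∀ n, Module R (A n)]
  {d : ∀ n : ℤ, A (n + 1) →ₗ[R] A n} {F : ℤ → ∀ n : ℤ, Submodule R (A n)}

variable (d F) in
/-- `diagCycles d F n` is the paper's `P_{n+1}`. -/
def diagCycles (n : ℤ) : Submodule R (A (n + 1)) :=
  F (n + 1) (n + 1) ⊓ (F n n).comap (d n)

variable (d F) in
/-- `diagBoundaries d F n` is the paper's `Q_{n+1}`. -/
def diagBoundaries (n : ℤ) : Submodule R (A (n + 1)) :=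
  (F (n + 1) (n + 1 + 1)).map (d (n + 1)) ⊔ F n (n + 1)

theorem mem_diagCycles {n : ℤ} {x : A (n + 1)} :
    x ∈ diagCycles d F n ↔ x ∈ F (n + 1) (n + 1) ∧ d n x ∈ F n n :=
  Iff.rfl

theorem mem_diagBoundaries {n : ℤ} {x : A (n + 1)} :
    x ∈ diagBoundaries d F n ↔
      ∃ y ∈ F (n + 1) (n + 1 + 1), ∃ z ∈ F n (n + 1), d (n + 1) y + z = x := by
  simp only [diagBoundaries, Submodule.mem_sup, Submodule.mem_map, exists_exists_and_eq_and]

theorem d_eq_d_of_eq_d_add (hdd : ∀ (n : ℤ) (x : A (n + 1 + 1)), d n (d (n + 1) x) = 0)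
    {n : ℤ} {x z : A (n + 1)} {y : A (n + 1 + 1)} (h : x = d (n + 1) y + z) :
    d n z = d n x := by
  rw [h, map_add, hdd, zero_add]

theorem diagBoundaries_le_diagCycles
    (hdd : ∀ (n : ℤ) (x : A (n + 1 + 1)), d n (d (n + 1) x) = 0)
    (hmono : ∀ p q n, p ≤ q → F p n ≤ F q n)
    (hFsub : ∀ (p n : ℤ), ∀ x ∈ F p (n + 1), d n x ∈ F p n) (n : ℤ) :
    diagBoundaries d F n ≤ diagCycles d F n := by
  rintro x hx
  obtain ⟨y, hy, z, hz, rfl⟩ := mem_diagBoundaries.mp hx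
  refine mem_diagCycles.mpr ⟨add_mem (hFsub _ _ y hy) (hmono _ _ _ (by omega) hz), ?_⟩
  rw [← d_eq_d_of_eq_d_add hdd rfl]
  exact hFsub n n z hz

theorem d_mem_diagCycles (hdd : ∀ (n : ℤ) (x : A (n + 1 + 1)), d n (d (n + 1) x) = 0)
    {n : ℤ} {x : A (n + 1 + 1)} (hx : x ∈ diagCycles d F (n + 1)) :
    d (n + 1) x ∈ diagCycles d F n :=
  ⟨hx.2, by simp [hdd]⟩

theorem d_mem_diagBoundaries (hdd : ∀ (n : ℤ) (x : A (n + 1 + 1)), d n (d (n + 1) x) = 0)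
    {n : ℤ} {x : A (n + 1 + 1)} (hx : x ∈ diagBoundaries d F (n + 1)) :
    d (n + 1) x ∈ diagBoundaries d F n := by
  obtain ⟨y, -, z, hz, rfl⟩ := mem_diagBoundaries.mp hx
  exact mem_diagBoundaries.mpr ⟨z, hz, 0, zero_mem _, by rw [map_add, hdd, zero_add, add_zero]⟩

theorem exists_d_eq_of_le_of_d_eq_zero
    (hdd : ∀ (n : ℤ) (x : A (n + 1 + 1)), d n (d (n + 1) x) = 0)
    (hmono : ∀ p q n, p ≤ q → F p n ≤ F q n)
    (hgr : ∀ (p n : ℤ), n + 1 ≠ p → ∀ x ∈ F p (n + 1), d n x ∈ F (p - 1) n →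
      ∃ y ∈ F p (n + 1 + 1), ∃ z ∈ F (p - 1) (n + 1), x = d (n + 1) y + z)
    {n p₀ : ℤ} (hp₀ : F p₀ (n + 1) = ⊥) :
    ∀ p ≤ n, ∀ z ∈ F p (n + 1), d n z = 0 → ∃ w ∈ F p (n + 1 + 1), d (n + 1) w = z := by
  have vanishing : ∀ p ≤ p₀, ∀ z ∈ F p (n + 1), ∃ w ∈ F p (n + 1 + 1), d (n + 1) w = z := by
    intro p hp z hz
    have : z = 0 := by simpa [hp₀] using hmono _ _ _ hp hz
    exact ⟨0, zero_mem _, by rw [map_zero, this]⟩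
  intro p hpn
  rcases le_total p p₀ with hp | hp
  · exact fun z hz _ ↦ vanishing p hp z hz
  induction p, hp using Int.leInduction with
  | base => exact fun z hz _ ↦ vanishing p₀ le_rfl z hz
  | succ p _ ih =>
    intro z hz hdz
    obtain ⟨y, hy, z', hz', hz_eq⟩ :=
      hgr (p + 1) n (by omega) z hz (by rw [hdz]; exact zero_mem _)
    rw [add_sub_cancel_right] at hz'
    obtain ⟨w, hw, rfl⟩ := ih (by omega) z' hz' (by rw [d_eq_d_of_eq_d_add hdd hz_eq, hdz])
    exact ⟨y + w, add_mem hy (hmono _ _ _ (by omega) hw), by rw [map_add, hz_eq]⟩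

theorem exists_eq_d_add_of_d_mem
    (hdd : ∀ (n : ℤ) (x : A (n + 1 + 1)), d n (d (n + 1) x) = 0)
    (hmono : ∀ p q n, p ≤ q → F p n ≤ F q n)
    (hgr : ∀ (p n : ℤ), n + 1 ≠ p → ∀ x ∈ F p (n + 1), d n x ∈ F (p - 1) n →
      ∃ y ∈ F p (n + 1 + 1), ∃ z ∈ F (p - 1) (n + 1), x = d (n + 1) y + z)
    {n : ℤ} : ∀ p, ∀ y ∈ F p (n + 1), d n y ∈ F n n →
      ∃ z : A (n + 1 + 1), ∃ x ∈ F (n + 1) (n + 1), y = d (n + 1) z + x := by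
  intro p
  rcases le_total p (n + 1) with hp | hp
  · exact fun y hy _ ↦ ⟨0, y, hmono _ _ _ hp hy, by rw [map_zero, zero_add]⟩
  induction p, hp using Int.leInduction with
  | base => exact fun y hy _ ↦ ⟨0, y, hy, by rw [map_zero, zero_add]⟩
  | succ p hp ih =>
    intro y hy hdy
    obtain ⟨w, -, y', hy', hy_eq⟩ :=
      hgr (p + 1) n (by omega) y hy (hmono _ _ _ (by omega) hdy)
    rw [add_sub_cancel_right] at hy'
    obtain ⟨z, x, hx, rfl⟩ := ih y' hy' (by rwa [d_eq_d_of_eq_d_add hdd hy_eq])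
    exact ⟨w + z, x, hx, by rw [hy_eq, map_add]; abel⟩

theorem exists_mem_diagBoundaries_d_eq
    (hdd : ∀ (n : ℤ) (x : A (n + 1 + 1)), d n (d (n + 1) x) = 0)
    (hmono : ∀ p q n, p ≤ q → F p n ≤ F q n)
    (hbdd : ∀ n : ℤ, ∃ p, F p n = ⊥)
    (hgr : ∀ (p n : ℤ), n + 1 ≠ p → ∀ x ∈ F p (n + 1), d n x ∈ F (p - 1) n →
      ∃ y ∈ F p (n + 1 + 1), ∃ z ∈ F (p - 1) (n + 1), x = d (n + 1) y + z)
    {n : ℤ} {x : A (n + 1)} (hx : x ∈ diagBoundaries d F n) (hdx : d n x = 0) :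
    ∃ y ∈ diagBoundaries d F (n + 1), d (n + 1) y = x := by
  obtain ⟨y, hy, z, hz, rfl⟩ := mem_diagBoundaries.mp hx
  obtain ⟨p₀, hp₀⟩ := hbdd (n + 1)
  obtain ⟨w, hw, rfl⟩ := exists_d_eq_of_le_of_d_eq_zero hdd hmono hgr hp₀ n le_rfl z hz
    (by rw [d_eq_d_of_eq_d_add hdd rfl, hdx])
  refine ⟨y + w, mem_diagBoundaries.mpr ⟨0, zero_mem _, y + w, ?_, by rw [map_zero, zero_add]⟩,
    map_add _ _ _⟩
  exact add_mem hy (hmono _ _ _ (by omega) hw)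

theorem exists_mem_diagCycles_d_eq_sub
    (hdd : ∀ (n : ℤ) (x : A (n + 1 + 1)), d n (d (n + 1) x) = 0)
    (hmono : ∀ p q n, p ≤ q → F p n ≤ F q n)
    (hexh : ∀ (n : ℤ) (x : A n), ∃ p, x ∈ F p n)
    (hgr : ∀ (p n : ℤ), n + 1 ≠ p → ∀ x ∈ F p (n + 1), d n x ∈ F (p - 1) n →
      ∃ y ∈ F p (n + 1 + 1), ∃ z ∈ F (p - 1) (n + 1), x = d (n + 1) y + z)
    {n : ℤ} {y : A (n + 1)} (hdy : d n y = 0) :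
    ∃ x ∈ diagCycles d F n, d n x = 0 ∧ ∃ z : A (n + 1 + 1), d (n + 1) z = y - x := by
  obtain ⟨p, hp⟩ := hexh (n + 1) y
  obtain ⟨z, x, hx, hy_eq⟩ :=
    exists_eq_d_add_of_d_mem hdd hmono hgr p y hp (by rw [hdy]; exact zero_mem _)
  have hdx : d n x = 0 := by rw [d_eq_d_of_eq_d_add hdd hy_eq, hdy]
  exact ⟨x, ⟨hx, by simp [hdx]⟩, hdx, z, by rw [hy_eq, add_sub_cancel_right]⟩

theorem exists_mem_diagCycles_d_eq
    (hdd : ∀ (n : ℤ) (x : A (n + 1 + 1)), d n (d (n + 1) x) = 0)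
    (hmono : ∀ p q n, p ≤ q → F p n ≤ F q n)
    (hexh : ∀ (n : ℤ) (x : A n), ∃ p, x ∈ F p n)
    (hgr : ∀ (p n : ℤ), n + 1 ≠ p → ∀ x ∈ F p (n + 1), d n x ∈ F (p - 1) n →
      ∃ y ∈ F p (n + 1 + 1), ∃ z ∈ F (p - 1) (n + 1), x = d (n + 1) y + z)
    {n : ℤ} {x : A (n + 1)} (hx : x ∈ diagCycles d F n) {z : A (n + 1 + 1)}
    (hz : d (n + 1) z = x) :
    ∃ w ∈ diagCycles d F (n + 1), d (n + 1) w = x := by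
  obtain ⟨p, hp⟩ := hexh (n + 1 + 1) z
  obtain ⟨u, w, hw, hz_eq⟩ :=
    exists_eq_d_add_of_d_mem hdd hmono hgr p z hp (by rw [hz]; exact hx.1)
  have hdw : d (n + 1) w = x := by rw [d_eq_d_of_eq_d_add hdd hz_eq, hz]
  exact ⟨w, mem_diagCycles.mpr ⟨hw, hdw ▸ hx.1⟩, hdw⟩

end FilteredChainComplex

open FilteredChainComplex in
theorem stmt17 {R : Type*} [Ring R] (A : ℤ → Type*)
    [∀ n, AddCommGroup (A n)] [∀ n, Module R (A n)]
    (d : ∀ n : ℤ, A (n + 1) →ₗ[R] A n)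
    (hdd : ∀ (n : ℤ) (x : A (n + 1 + 1)), d n (d (n + 1) x) = 0)
    (F : ℤ → ∀ n : ℤ, Submodule R (A n))
    (hmono : ∀ p q n, p ≤ q → F p n ≤ F q n)
    (hFsub : ∀ (p n : ℤ), ∀ x ∈ F p (n + 1), d n x ∈ F p n)
    (hexh : ∀ (n : ℤ) (x : A n), ∃ p, x ∈ F p n)
    (hbdd : ∀ n : ℤ, ∃ p, F p n = ⊥)
    (hgr : ∀ (p n : ℤ), n + 1 ≠ p → ∀ x ∈ F p (n + 1), d n x ∈ F (p - 1) n →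
      ∃ y ∈ F p (n + 1 + 1), ∃ z ∈ F (p - 1) (n + 1), x = d (n + 1) y + z) :
    ∀ P Q : ∀ n : ℤ, Submodule R (A (n + 1)),
      (∀ n : ℤ, P n = F (n + 1) (n + 1) ⊓ (F n n).comap (d n)) →
      (∀ n : ℤ, Q n = (F (n + 1) (n + 1 + 1)).map (d (n + 1)) ⊔ F n (n + 1)) →
      -- Q ⊆ P
      (∀ n : ℤ, Q n ≤ P n) ∧
      -- P and Q are subcomplexes
      (∀ n : ℤ, ∀ x ∈ P (n + 1), d (n + 1) x ∈ P n) ∧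
      (∀ n : ℤ, ∀ x ∈ Q (n + 1), d (n + 1) x ∈ Q n) ∧
      -- Q is acyclic, hence P → P/Q is a quasi-isomorphism
      (∀ n : ℤ, ∀ x ∈ Q n, d n x = 0 → ∃ y ∈ Q (n + 1), d (n + 1) y = x) ∧
      -- P → A is a quasi-isomorphism: surjectivity on homology ...
      (∀ (n : ℤ) (y : A (n + 1)), d n y = 0 →
        ∃ x ∈ P n, d n x = 0 ∧ ∃ z : A (n + 1 + 1), d (n + 1) z = y - x) ∧
      -- ... and injectivity on homology
      (∀ n : ℤ, ∀ x ∈ P n, d n x = 0 →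
        (∃ z : A (n + 1 + 1), d (n + 1) z = x) →
        ∃ w ∈ P (n + 1), d (n + 1) w = x) := by
  intro P Q hP hQ
  obtain rfl : P = diagCycles d F := funext hP
  obtain rfl : Q = diagBoundaries d F := funext hQ
  exact ⟨diagBoundaries_le_diagCycles hdd hmono hFsub,
    fun _ _ ↦ d_mem_diagCycles hdd,
    fun _ _ ↦ d_mem_diagBoundaries hdd,
    fun _ _ hx hdx ↦ exists_mem_diagBoundaries_d_eq hdd hmono hbdd hgr hx hdx,
    fun _ _ hdy ↦ exists_mem_diagCycles_d_eq_sub hdd hmono hexh hgr hdy,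
    fun _ _ hx _ ⟨_, hz⟩ ↦ exists_mem_diagCycles_d_eq hdd hmono hexh hgr hx hz⟩
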